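/- Diagonal product evaluation: for all nonnegative integers i, j, k and integer L with L ≥ max(i+j, j+k, k+i), ∑_{s≥0} q^{s(L+2)-T_s+T_{i-s}+T_{j-s}+T_{k-s}} [L-s choose s, i-s, j-s]_q [L-i-j choose k-s]_q = q^{T_i+T_j+T_k} [L-k choose i]_q [L-i choose j]_q [L-j choose k]_q. -/

import Mathlib

open Finset

noncomputable section

abbrev K : Type := RatFunc ℚ

def q : K := RatFunc.X

/-- Extended q-Pochhammer symbol `(a;q)_n` for integer `n`. -/
def poch (a : K) (n : ℤ) : K :=
  if 0 ≤ n then ∏ j ∈ Finset.range n.toNat, (1 - a * q ^ j)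
  else (∏ j ∈ Finset.range (-n).toNat, (1 - a * q ^ (-(j + 1 : ℤ))))⁻¹

/-- Extended Gaussian binomial coefficient `[n choose m]_q`. -/
def qbinom (n m : ℤ) : K :=
  if 0 ≤ m then poch (q ^ (n - m + 1)) m / poch q m else 0

/-- Triangular number `T_n = n(n+1)/2`. -/
def T (n : ℤ) : ℤ := n * (n + 1) / 2

/-- The q-multinomial coefficient `[L choose a,b,c]_q`. -/
def qmul3 (L a b c : ℤ) : K := qbinom L a * qbinom (L - a) b * qbinom (L - a - b) c



/-!
Both sides, viewed as functions `X k` of `k`, satisfy the first-order recurrence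
`(1 - q^(L-k)) (1 - q^(k+1)) X (k+1) = q^(k+1) (1 - q^(L-k-i)) (1 - q^(L-j-k)) X k`
and agree at `k = 0`. For the product this is two Pascal-type shifts of Gaussian binomials.
For the sum it holds termwise up to a difference `G (s+1) - G s` of a Wilf–Zeilberger
certificate, which telescopes away because `G 0 = G (i+1) = 0`.
-/

lemma q_ne_zero : q ≠ 0 := RatFunc.X_ne_zero

lemma q_pow_ne_one {n : ℕ} (hn : n ≠ 0) : q ^ n ≠ 1 := fun h => hn <| by
  have h' := congrArg RatFunc.intDegree h
  rwa [q, ← RatFunc.algebraMap_X, ← map_pow, RatFunc.intDegree_polynomial,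
    Polynomial.natDegree_X_pow, RatFunc.intDegree_one, Nat.cast_eq_zero] at h'

lemma one_sub_q_zpow_ne_zero {m : ℤ} (hm : m ≠ 0) : 1 - q ^ m ≠ 0 := by
  rw [sub_ne_zero, ne_comm]
  obtain ⟨n, rfl | rfl⟩ := Int.eq_nat_or_neg m
  · rw [zpow_natCast]
    exact q_pow_ne_one (by omega)
  · rw [zpow_neg, ne_eq, inv_eq_one, zpow_natCast]
    exact q_pow_ne_one (by omega)

/-- `qprod c m` is the q-Pochhammer symbol `(q^c; q)_m`. -/
def qprod (c : ℤ) (m : ℕ) : K := ∏ t ∈ range m, (1 - q ^ (c + t))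

lemma qprod_succ (c : ℤ) (m : ℕ) : qprod c (m + 1) = qprod c m * (1 - q ^ (c + m)) :=
  prod_range_succ _ _

lemma qprod_add (c : ℤ) (m n : ℕ) : qprod c (m + n) = qprod c m * qprod (c + m) n := by
  simp only [qprod, prod_range_add, Nat.cast_add, add_assoc]

lemma qprod_succ' (c : ℤ) (m : ℕ) : qprod c (m + 1) = (1 - q ^ c) * qprod (c + 1) m := by
  rw [add_comm m 1, qprod_add]
  simp [qprod]

lemma qprod_one_succ (m : ℕ) : qprod 1 (m + 1) = qprod 1 m * (1 - q ^ ((m : ℤ) + 1)) := by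
  rw [qprod_succ, add_comm (1 : ℤ)]

lemma qprod_ne_zero {c : ℤ} (hc : 0 < c) (m : ℕ) : qprod c m ≠ 0 :=
  prod_ne_zero_iff.mpr fun t _ => one_sub_q_zpow_ne_zero (by omega)

lemma qbinom_natCast (n : ℤ) (m : ℕ) : qbinom n m = qprod (n - m + 1) m / qprod 1 m := by
  simp only [qbinom, poch, Int.natCast_nonneg, if_true, Int.toNat_natCast, qprod,
    zpow_add₀ q_ne_zero, zpow_natCast, zpow_one]

lemma qbinom_of_neg (n : ℤ) {m : ℤ} (hm : m < 0) : qbinom n m = 0 := by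
  rw [qbinom, if_neg hm.not_ge]

lemma qbinom_zero_right (n : ℤ) : qbinom n 0 = 1 := by
  simpa [qprod] using qbinom_natCast n 0

lemma qbinom_mul_one_sub_q_zpow_of_nonpos (n : ℤ) {m : ℤ} (hm : m ≤ 0) :
    qbinom n m * (1 - q ^ m) = 0 := by
  rcases hm.lt_or_eq with h | rfl
  · rw [qbinom_of_neg n h, zero_mul]
  · rw [zpow_zero, sub_self, mul_zero]

lemma qbinom_succ_right_mul (n m : ℤ) :
    qbinom n (m + 1) * (1 - q ^ (m + 1)) = qbinom n m * (1 - q ^ (n - m)) := by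
  rcases le_or_gt 0 m with hm | hm
  · lift m to ℕ using hm
    have hF : qprod 1 m ≠ 0 := qprod_ne_zero one_pos m
    have hm1 : 1 - q ^ ((m : ℤ) + 1) ≠ 0 := one_sub_q_zpow_ne_zero (by omega)
    rw [← Nat.cast_succ, qbinom_natCast, qbinom_natCast, qprod_one_succ, qprod_succ',
      Nat.cast_succ, show n - (m + 1) + 1 = n - m by ring]
    field_simp
  · rw [qbinom_mul_one_sub_q_zpow_of_nonpos n (by omega), qbinom_of_neg n hm, zero_mul]

lemma qbinom_succ_left_mul (n m : ℤ) :
    qbinom (n + 1) m * (1 - q ^ (n + 1 - m)) = qbinom n m * (1 - q ^ (n + 1)) := by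
  rcases le_or_gt 0 m with hm | hm
  · lift m to ℕ using hm
    have h₁ := qprod_succ' (n - m + 1) m
    have h₂ := qprod_succ (n - m + 1) m
    rw [qbinom_natCast, qbinom_natCast, div_mul_eq_mul_div, div_mul_eq_mul_div,
      show n + 1 - m + 1 = n - m + 1 + 1 by ring, show n + 1 - m = n - m + 1 by ring, mul_comm,
      ← h₁, h₂, show n - m + 1 + m = n + 1 by ring]
  · rw [qbinom_of_neg _ hm, qbinom_of_neg _ hm, zero_mul, zero_mul]

lemma qmul3_natCast (N : ℤ) (a b c : ℕ) :
    qmul3 N a b c =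
      qprod (N - a - b - c + 1) (c + b + a) / (qprod 1 a * qprod 1 b * qprod 1 c) := by
  rw [qmul3, qbinom_natCast, qbinom_natCast, qbinom_natCast, qprod_add, qprod_add,
    show N - a - b - c + 1 + c = N - a - b + 1 by ring,
    show N - a - b - c + 1 + ↑(c + b) = N - a + 1 by push_cast; ring]
  ring

lemma qmul3_succ_mul (N : ℤ) (s a b : ℕ) :
    qmul3 (N - 1) ↑(s + 1) a b * ((1 - q ^ ((s : ℤ) + 1)) * (1 - q ^ N)) =
      qmul3 N s ↑(a + 1) ↑(b + 1) *
        ((1 - q ^ ((a : ℤ) + 1)) * (1 - q ^ ((b : ℤ) + 1))) := by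
  have hN := qprod_succ (N - s - a - b - 1) (b + a + s + 1)
  have hFs := qprod_ne_zero one_pos s
  have hFa := qprod_ne_zero one_pos a
  have hFb := qprod_ne_zero one_pos b
  have hs : 1 - q ^ ((s : ℤ) + 1) ≠ 0 := one_sub_q_zpow_ne_zero (by omega)
  have ha : 1 - q ^ ((a : ℤ) + 1) ≠ 0 := one_sub_q_zpow_ne_zero (by omega)
  have hb : 1 - q ^ ((b : ℤ) + 1) ≠ 0 := one_sub_q_zpow_ne_zero (by omega)
  rw [qmul3_natCast, qmul3_natCast, qprod_one_succ, qprod_one_succ, qprod_one_succ,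
    show N - 1 - ↑(s + 1) - a - b + 1 = N - s - a - b - 1 by push_cast; ring,
    show N - s - ↑(a + 1) - ↑(b + 1) + 1 = N - s - a - b - 1 by push_cast; ring,
    show b + 1 + (a + 1) + s = b + a + s + 1 + 1 by ring, hN]
  push_cast
  rw [show N - s - a - b - 1 + (b + a + s + 1) = N by ring]
  field_simp
  rw [← add_assoc, mul_comm]

lemma qmul3_diag_succ_mul (i j s : ℕ) (L : ℤ) :
    qmul3 (L - ↑(s + 1)) ↑(s + 1) (↑i - ↑(s + 1)) (↑j - ↑(s + 1)) *
        ((1 - q ^ ((s : ℤ) + 1)) * (1 - q ^ (L - s))) =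
      qmul3 (L - s) s (↑i - s) (↑j - s) *
        ((1 - q ^ ((i : ℤ) - s)) * (1 - q ^ ((j : ℤ) - s))) := by
  rcases lt_or_ge s i with hi | hi
  · rcases lt_or_ge s j with hj | hj
    · obtain ⟨a, rfl⟩ := Nat.exists_eq_add_of_lt hi
      obtain ⟨b, rfl⟩ := Nat.exists_eq_add_of_lt hj
      convert qmul3_succ_mul (L - s) s a b using 3 <;> push_cast <;> ring_nf
    · rw [qmul3, qmul3, qbinom_of_neg _ (by push_cast; omega : (j : ℤ) - ↑(s + 1) < 0)]
      linear_combination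
        -(qbinom (L - s) s * qbinom (L - s - s) (i - s) * (1 - q ^ ((i : ℤ) - s))) *
          qbinom_mul_one_sub_q_zpow_of_nonpos (L - s - s - (i - s)) (by omega : (j : ℤ) - s ≤ 0)
  · rw [qmul3, qmul3, qbinom_of_neg _ (by push_cast; omega : (i : ℤ) - ↑(s + 1) < 0)]
    linear_combination
      -(qbinom (L - s) s * qbinom (L - s - s - (i - s)) (j - s) * (1 - q ^ ((j : ℤ) - s))) *
        qbinom_mul_one_sub_q_zpow_of_nonpos (L - s - s) (by omega : (i : ℤ) - s ≤ 0)

lemma T_succ (m : ℤ) : T (m + 1) = T m + (m + 1) := by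
  rw [T, T, show (m + 1) * (m + 1 + 1) = m * (m + 1) + (m + 1) * 2 by ring,
    Int.add_mul_ediv_right _ _ two_ne_zero]

lemma T_sub_one (m : ℤ) : T (m - 1) = T m - m := by
  have h := T_succ (m - 1)
  rw [sub_add_cancel] at h
  linarith

def summandExp (i j k : ℕ) (L : ℤ) (s : ℕ) : ℤ :=
  s * (L + 2) - T s + T ((i : ℤ) - s) + T ((j : ℤ) - s) + T ((k : ℤ) - s)

def summand (i j k : ℕ) (L : ℤ) (s : ℕ) : K :=
  q ^ summandExp i j k L s * qmul3 (L - s) s ((i : ℤ) - s) ((j : ℤ) - s) *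
    qbinom (L - i - j) ((k : ℤ) - s)

/-- The Wilf–Zeilberger certificate of `summand` for its recurrence in `k`. -/
def certificate (i j k : ℕ) (L : ℤ) (s : ℕ) : K :=
  -(q ^ (summandExp i j k L s + k + 1 - s) * (1 - q ^ (s : ℤ)) * (1 - q ^ (L + 1 - s)) *
    qmul3 (L - s) s ((i : ℤ) - s) ((j : ℤ) - s) * qbinom (L - i - j) ((k : ℤ) + 1 - s))

lemma summandExp_succ_k (i j k : ℕ) (L : ℤ) (s : ℕ) :
    summandExp i j (k + 1) L s = summandExp i j k L s + (k + 1 - s) := by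
  simp only [summandExp, Nat.cast_succ, show (k : ℤ) + 1 - s = k - s + 1 by ring, T_succ]
  ring

lemma summandExp_succ_s (i j k : ℕ) (L : ℤ) (s : ℕ) :
    summandExp i j k L (s + 1) = summandExp i j k L s + (L + 1 + 2 * s - i - j - k) := by
  simp only [summandExp, Nat.cast_succ, T_succ, ← sub_sub, T_sub_one]
  ring

lemma certificate_rational_identity (i j k s : ℕ) (L : ℤ) :
    (1 - q ^ (L - i - j - ((k : ℤ) - s))) * q ^ ((k : ℤ) + 1 - s) *
      ((1 - q ^ (L - k)) * (1 - q ^ ((k : ℤ) + 1)) -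
        (1 - q ^ (s : ℤ)) * (1 - q ^ (L + 1 - s))) =
    (1 - q ^ ((k : ℤ) + 1 - s)) *
      (q ^ ((k : ℤ) + 1) * ((1 - q ^ (L - k - i)) * (1 - q ^ (L - j - k))) -
        q ^ (L + 1 + (s : ℤ) - i - j) *
          ((1 - q ^ ((i : ℤ) - s)) * (1 - q ^ ((j : ℤ) - s)))) := by
  have hq := q_ne_zero
  simp only [zpow_add₀ hq, zpow_sub₀ hq, zpow_one]
  field_simp
  ring

lemma summand_succ_mul (i j k : ℕ) (L : ℤ) (s : ℕ) :
    (1 - q ^ (L - k)) * (1 - q ^ ((k : ℤ) + 1)) * summand i j (k + 1) L s =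
      q ^ ((k : ℤ) + 1) * ((1 - q ^ (L - k - i)) * (1 - q ^ (L - j - k))) * summand i j k L s +
        (certificate i j k L (s + 1) - certificate i j k L s) := by
  simp only [summand, certificate, summandExp_succ_k, summandExp_succ_s]
  push_cast
  set E := summandExp i j k L s
  rcases eq_or_ne (s : ℤ) (k + 1) with hs | hs
  -- Here `1 - q ^ (k + 1 - s)` vanishes, but so do `summand` at `s` and `certificate` at `s + 1`.
  · rw [qbinom_of_neg _ (by omega : (k : ℤ) - s < 0),
      qbinom_of_neg _ (by omega : (k : ℤ) + 1 - (s + 1) < 0), hs,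
      show E + k + 1 - (k + 1) = E by ring, show L + 1 - ((k : ℤ) + 1) = L - k by ring,
      sub_self, add_zero]
    ring
  · have hB := qbinom_succ_right_mul (L - i - j) ((k : ℤ) - s)
    have hP := qmul3_diag_succ_mul i j s L
    have hR := certificate_rational_identity i j k s L
    rw [show (k : ℤ) - s + 1 = k + 1 - s by ring] at hB
    push_cast at hP
    rw [show E + (L + 1 + 2 * s - i - j - k) + k + 1 - (s + 1) = E + (L + 1 + s - i - j) by
        ring,
      show E + k + 1 - s = E + (k + 1 - s) by ring, show (k : ℤ) + 1 - (s + 1) = k - s by ring,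
      show L + 1 - ((s : ℤ) + 1) = L - s by ring,
      zpow_add₀ q_ne_zero E, zpow_add₀ q_ne_zero E]
    apply mul_left_cancel₀ (one_sub_q_zpow_ne_zero (by omega : (k : ℤ) + 1 - s ≠ 0))
    linear_combination
      (q ^ E * q ^ ((k : ℤ) + 1 - s) * qmul3 (L - s) s ((i : ℤ) - s) ((j : ℤ) - s) *
        ((1 - q ^ (L - k)) * (1 - q ^ ((k : ℤ) + 1)) -
          (1 - q ^ (s : ℤ)) * (1 - q ^ (L + 1 - s)))) * hB
      + ((1 - q ^ ((k : ℤ) + 1 - s)) * q ^ E * q ^ (L + 1 + (s : ℤ) - i - j) *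
        qbinom (L - i - j) ((k : ℤ) - s)) * hP
      + (q ^ E * qmul3 (L - s) s ((i : ℤ) - s) ((j : ℤ) - s) *
        qbinom (L - i - j) ((k : ℤ) - s)) * hR

lemma certificate_zero (i j k : ℕ) (L : ℤ) : certificate i j k L 0 = 0 := by
  simp [certificate]

lemma certificate_succ_self (i j k : ℕ) (L : ℤ) : certificate i j k L (i + 1) = 0 := by
  rw [certificate, qmul3, qbinom_of_neg _ (by push_cast; omega : (i : ℤ) - ↑(i + 1) < 0)]
  ring

lemma sum_summand_succ_mul (i j k : ℕ) (L : ℤ) :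
    (1 - q ^ (L - k)) * (1 - q ^ ((k : ℤ) + 1)) *
        ∑ s ∈ range (i + 1), summand i j (k + 1) L s =
      q ^ ((k : ℤ) + 1) * ((1 - q ^ (L - k - i)) * (1 - q ^ (L - j - k))) *
        ∑ s ∈ range (i + 1), summand i j k L s := by
  rw [mul_sum, mul_sum]
  simp only [summand_succ_mul, sum_add_distrib, sum_range_sub (certificate i j k L),
    certificate_zero, certificate_succ_self, sub_zero, add_zero]

def closedForm (i j k : ℕ) (L : ℤ) : K :=
  q ^ (T i + T j + T k) * qbinom (L - k) i * qbinom (L - i) j * qbinom (L - j) k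

lemma closedForm_succ_mul (i j k : ℕ) (L : ℤ) :
    (1 - q ^ (L - k)) * (1 - q ^ ((k : ℤ) + 1)) * closedForm i j (k + 1) L =
      q ^ ((k : ℤ) + 1) * ((1 - q ^ (L - k - i)) * (1 - q ^ (L - j - k))) *
        closedForm i j k L := by
  have hi := qbinom_succ_left_mul (L - k - 1) i
  have hk := qbinom_succ_right_mul (L - j) k
  rw [sub_add_cancel] at hi
  rw [closedForm, closedForm, Nat.cast_succ, T_succ, ← sub_sub,
    show T i + T j + (T k + (k + 1)) = T i + T j + T k + (k + 1) by ring,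
    zpow_add₀ q_ne_zero (T i + T j + T k)]
  linear_combination q ^ (T i + T j + T k) * q ^ ((k : ℤ) + 1) * qbinom (L - i) j *
    (qbinom (L - k) i * (1 - q ^ (L - k - i)) * hk -
      qbinom (L - j) ((k : ℤ) + 1) * (1 - q ^ ((k : ℤ) + 1)) * hi)

lemma sum_summand_zero (i j : ℕ) (L : ℤ) :
    ∑ s ∈ range (i + 1), summand i j 0 L s = closedForm i j 0 L := by
  rw [sum_eq_single_of_mem 0 (by simp)]
  · simp [summand, summandExp, closedForm, qmul3, qbinom_zero_right, T, mul_assoc]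
  · intro s _ hs
    rw [summand, qbinom_of_neg _ (by omega), mul_zero]

theorem diagonal_product_evaluation_general (i j k : ℕ) (L : ℤ)
    (h2 : (j : ℤ) + k ≤ L) :
    (∑ s ∈ Finset.range (i + 1),
      q ^ ((s : ℤ) * (L + 2) - T s + T ((i : ℤ) - s) + T ((j : ℤ) - s) + T ((k : ℤ) - s)) *
        qmul3 (L - s) s ((i : ℤ) - s) ((j : ℤ) - s) * qbinom (L - i - j) ((k : ℤ) - s)) =
      q ^ (T (i : ℤ) + T (j : ℤ) + T (k : ℤ)) *
        qbinom (L - k) i * qbinom (L - i) j * qbinom (L - j) k := by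
  change ∑ s ∈ range (i + 1), summand i j k L s = closedForm i j k L
  induction k with
  | zero => exact sum_summand_zero i j L
  | succ k ih =>
    have hk : (1 - q ^ (L - k)) * (1 - q ^ ((k : ℤ) + 1)) ≠ 0 :=
      mul_ne_zero (one_sub_q_zpow_ne_zero (by omega)) (one_sub_q_zpow_ne_zero (by omega))
    apply mul_left_cancel₀ hk
    rw [sum_summand_succ_mul, closedForm_succ_mul, ih (by omega)]

theorem diagonal_product_evaluation (i j k : ℕ) (L : ℤ)
    (h1 : (i : ℤ) + j ≤ L) (h2 : (j : ℤ) + k ≤ L) (h3 : (k : ℤ) + i ≤ L) :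
    (∑ s ∈ Finset.range (i + 1),
      q ^ ((s : ℤ) * (L + 2) - T s + T ((i : ℤ) - s) + T ((j : ℤ) - s) + T ((k : ℤ) - s)) *
        qmul3 (L - s) s ((i : ℤ) - s) ((j : ℤ) - s) * qbinom (L - i - j) ((k : ℤ) - s)) =
      q ^ (T (i : ℤ) + T (j : ℤ) + T (k : ℤ)) *
        qbinom (L - k) i * qbinom (L - i) j * qbinom (L - j) k :=
  diagonal_product_evaluation_general i j k L h2
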